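/- With the gluing construction J, two vertices u'_i ∈ V(G_i)\{u_i} and u'_j ∈ V(G_j)\{u_j} with i ≠ j are mutually maximally distant in J if and only if u'_i is maximally distant from u_i in G_i and u'_j is maximally distant from u_j in G_j. -/

import Mathlib

open SimpleGraph

/-- `y` is maximally distant from `x` in `G`: no neighbor of `y` is farther from `x` than `y`. -/
def MaxDistantFrom {V : Type*} (G : SimpleGraph V) (y x : V) : Prop :=
  ∀ z, G.Adj y z → G.dist z x ≤ G.dist y x

/-- `u` and `v` are mutually maximally distant in `G`. -/
def MutuallyMaxDistant {V : Type*} (G : SimpleGraph V) (u v : V) : Prop :=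
  MaxDistantFrom G u v ∧ MaxDistantFrom G v u

/-- The strong resolving graph of `G`: edges are the mutually maximally distant pairs. -/
def srGraph {V : Type*} (G : SimpleGraph V) : SimpleGraph V where
  Adj u v := u ≠ v ∧ MutuallyMaxDistant G u v
  symm := ⟨fun u v h => ⟨h.1.symm, h.2.2, h.2.1⟩⟩
  loopless := ⟨fun u h => h.1 rfl⟩

/-- `w` strongly resolves `u` and `v`: `v` lies on a shortest `w`–`u` path, or
`u` lies on a shortest `w`–`v` path. -/
def StronglyResolves {V : Type*} (G : SimpleGraph V) (w u v : V) : Prop :=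
  G.dist w v + G.dist v u = G.dist w u ∨ G.dist w u + G.dist u v = G.dist w v

/-- `R` is a strong resolving set for `G`. -/
def StrongResolvingSet {V : Type*} (G : SimpleGraph V) (R : Set V) : Prop :=
  ∀ u v : V, u ≠ v → ∃ w ∈ R, StronglyResolves G w u v
/-- The graph obtained from the disjoint union of the graphs `G i` and `H` by identifying,
for each `i`, the vertex `u i` of `G i` with the vertex `v i` of `H`.  The vertices of
`G i` other than `u i` keep their identity (as `Sum.inl ⟨i, x⟩`), the vertices of `H`
keep their identity (as `Sum.inr w`), and `u i` is identified with `v i`. -/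
def glue {k : ℕ} {α : Fin k → Type*} {β : Type*}
    (G : ∀ i, SimpleGraph (α i)) (H : SimpleGraph β) (u : ∀ i, α i) (v : Fin k → β) :
    SimpleGraph ((Σ i, {x : α i // x ≠ u i}) ⊕ β) where
  Adj a b :=
    (∃ (i : Fin k) (x y : {z : α i // z ≠ u i}), (G i).Adj x.1 y.1 ∧
        a = Sum.inl ⟨i, x⟩ ∧ b = Sum.inl ⟨i, y⟩) ∨
    (∃ (i : Fin k) (x : {z : α i // z ≠ u i}), (G i).Adj x.1 (u i) ∧
        ((a = Sum.inl ⟨i, x⟩ ∧ b = Sum.inr (v i)) ∨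
         (b = Sum.inl ⟨i, x⟩ ∧ a = Sum.inr (v i)))) ∨
    (∃ w w' : β, H.Adj w w' ∧ a = Sum.inr w ∧ b = Sum.inr w')
  symm := by
    constructor
    rintro a b (⟨i, x, y, hxy, ha, hb⟩ | ⟨i, x, hx, h | h⟩ | ⟨w, w', hww, ha, hb⟩)
    · exact Or.inl ⟨i, y, x, hxy.symm, hb, ha⟩
    · exact Or.inr (Or.inl ⟨i, x, hx, Or.inr h⟩)
    · exact Or.inr (Or.inl ⟨i, x, hx, Or.inl h⟩)
    · exact Or.inr (Or.inr ⟨w', w, hww.symm, hb, ha⟩)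
  loopless := by
    constructor
    rintro a (⟨i, x, y, hxy, ha, hb⟩ | ⟨i, x, _, ⟨ha, hb⟩ | ⟨ha, hb⟩⟩ | ⟨w, w', hww, ha, hb⟩)
    · subst ha
      injection hb with h
      injection h with h1 h2
      subst h2
      exact (G i).loopless.irrefl _ hxy
    · subst ha; simp at hb
    · subst ha; simp at hb
    · subst ha
      injection hb with h
      subst h
      exact H.loopless.irrefl _ hww

/-!
Since `u i ≡ v i` is a cut vertex of the glued graph, for `i ≠ j` the distance from a vertex `z`
of `G i` to a vertex `y` of `G j` is `d(z, u i) + d_H(v i, v j) + d(u j, y)`. The lower bound holds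
because the obvious extension of this expression to all vertices changes by at most one along
every edge. The neighbours of `x ≠ u i` in the glued graph are its neighbours in `G i`, so the
distance to `y` grows along an edge at `x` exactly when `d(·, u i)` does.
-/

namespace SimpleGraph

variable {V W : Type*} {G : SimpleGraph V} {a b : V}

theorem Adj.dist_le_dist_add_one (h : G.Adj a b) (c : V) : G.dist a c ≤ G.dist b c + 1 := by
  have := h.reachable.dist_triangle_left c
  rw [dist_eq_one_iff_adj.mpr h] at this
  omega

theorem Walk.le_length_add_of_adj_le {f : V → ℕ} (hf : ∀ ⦃a b⦄, G.Adj a b → f a ≤ f b + 1)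
    (p : G.Walk a b) : f a ≤ p.length + f b := by
  induction p with
  | nil => simp
  | cons h _ ih => have := hf h; simp only [Walk.length_cons]; omega

theorem Reachable.le_dist_add_of_adj_le {f : V → ℕ} (hf : ∀ ⦃a b⦄, G.Adj a b → f a ≤ f b + 1)
    (h : G.Reachable a b) : f a ≤ G.dist a b + f b := by
  obtain ⟨p, hp⟩ := h.exists_walk_length_eq_dist
  exact hp ▸ p.le_length_add_of_adj_le hf

theorem Hom.dist_map_le {G' : SimpleGraph W} (f : G →g G') (h : G.Reachable a b) :
    G'.dist (f a) (f b) ≤ G.dist a b := by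
  obtain ⟨p, hp⟩ := h.exists_walk_length_eq_dist
  calc G'.dist (f a) (f b) ≤ (p.map f).length := G'.dist_le _
    _ = G.dist a b := by rw [Walk.length_map, hp]

end SimpleGraph

section Glue

variable {k : ℕ} {α : Fin k → Type*} {β : Type*}
  (G : ∀ i, SimpleGraph (α i)) (H : SimpleGraph β) (u : ∀ i, α i) (v : Fin k → β)

open Classical in
noncomputable def glueHomPart (i : Fin k) : G i →g glue G H u v where
  toFun z := if h : z = u i then Sum.inr (v i) else Sum.inl ⟨i, z, h⟩
  map_rel' {a b} hab := by
    split_ifs with ha hb hb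
    · exact absurd (ha.trans hb.symm) hab.ne
    · exact Or.inr (Or.inl ⟨i, ⟨b, hb⟩, ha ▸ hab.symm, Or.inr ⟨rfl, rfl⟩⟩)
    · exact Or.inr (Or.inl ⟨i, ⟨a, ha⟩, hb ▸ hab, Or.inl ⟨rfl, rfl⟩⟩)
    · exact Or.inl ⟨i, ⟨a, ha⟩, ⟨b, hb⟩, hab, rfl, rfl⟩

def glueHomHub : H →g glue G H u v where
  toFun := Sum.inr
  map_rel' hab := Or.inr (Or.inr ⟨_, _, hab, rfl, rfl⟩)

/-- The distance to `glueHomPart G H u v j y`, computed through the cut vertices `v l`. -/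
noncomputable def glueDistTo (j : Fin k) (y : α j) : (Σ i, {x : α i // x ≠ u i}) ⊕ β → ℕ
  | Sum.inr w => H.dist w (v j) + (G j).dist (u j) y
  | Sum.inl ⟨l, z⟩ =>
    if h : l = j then (G j).dist (h ▸ z.1) y
    else (G l).dist z (u l) + H.dist (v l) (v j) + (G j).dist (u j) y

variable {G H u v}

@[simp]
theorem glueHomPart_apply_self (i : Fin k) : glueHomPart G H u v i (u i) = Sum.inr (v i) :=
  dif_pos rfl

theorem glueHomPart_apply_of_ne {i : Fin k} {z : α i} (hz : z ≠ u i) :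
    glueHomPart G H u v i z = Sum.inl ⟨i, z, hz⟩ :=
  dif_neg hz

@[simp]
theorem glueHomHub_apply (w : β) : glueHomHub G H u v w = Sum.inr w := rfl

theorem glue_adj_iff {a b : (Σ i, {x : α i // x ≠ u i}) ⊕ β} :
    (glue G H u v).Adj a b ↔
      (∃ i z z', (G i).Adj z z' ∧
        a = glueHomPart G H u v i z ∧ b = glueHomPart G H u v i z') ∨
      ∃ w w', H.Adj w w' ∧ a = Sum.inr w ∧ b = Sum.inr w' := by
  constructor
  · rintro (⟨i, x, y, h, rfl, rfl⟩ | ⟨i, x, h, ⟨rfl, rfl⟩ | ⟨rfl, rfl⟩⟩ | h)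
    · exact .inl ⟨i, x, y, h, (glueHomPart_apply_of_ne x.2).symm,
        (glueHomPart_apply_of_ne y.2).symm⟩
    · exact .inl ⟨i, x, u i, h, (glueHomPart_apply_of_ne x.2).symm,
        (glueHomPart_apply_self i).symm⟩
    · exact .inl ⟨i, u i, x, h.symm, (glueHomPart_apply_self i).symm,
        (glueHomPart_apply_of_ne x.2).symm⟩
    · exact .inr h
  · rintro (⟨i, z, z', h, rfl, rfl⟩ | ⟨w, w', h, rfl, rfl⟩)
    · exact (glueHomPart G H u v i).map_adj h
    · exact (glueHomHub G H u v).map_adj h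

theorem glue_adj_inl_iff {i : Fin k} {x : {z : α i // z ≠ u i}}
    {b : (Σ i, {x : α i // x ≠ u i}) ⊕ β} :
    (glue G H u v).Adj (Sum.inl ⟨i, x⟩) b ↔
      ∃ z, (G i).Adj x.1 z ∧ b = glueHomPart G H u v i z := by
  constructor
  · rintro (⟨l, x', y, h, ⟨⟩, rfl⟩ | ⟨l, x', h, ⟨⟨⟩, rfl⟩ | ⟨-, ⟨⟩⟩⟩ | ⟨w, w', -, ⟨⟩, -⟩)
    · exact ⟨y, h, (glueHomPart_apply_of_ne y.2).symm⟩
    · exact ⟨u i, h, (glueHomPart_apply_self i).symm⟩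
  · rintro ⟨z, h, rfl⟩
    exact glueHomPart_apply_of_ne x.2 ▸ (glueHomPart G H u v i).map_adj h

theorem glueDistTo_part_self {j : Fin k} (y z : α j) :
    glueDistTo G H u v j y (glueHomPart G H u v j z) = (G j).dist z y := by
  by_cases hz : z = u j
  · subst hz
    simp [glueDistTo]
  · simp [glueHomPart_apply_of_ne hz, glueDistTo]

theorem glueDistTo_part_of_ne {j l : Fin k} (hl : l ≠ j) (y : α j) (z : α l) :
    glueDistTo G H u v j y (glueHomPart G H u v l z) =
      (G l).dist z (u l) + H.dist (v l) (v j) + (G j).dist (u j) y := by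
  by_cases hz : z = u l
  · subst hz
    simp [glueDistTo]
  · simp [glueHomPart_apply_of_ne hz, glueDistTo, hl]

theorem glueDistTo_le_of_adj (j : Fin k) (y : α j) {a b : (Σ i, {x : α i // x ≠ u i}) ⊕ β}
    (hab : (glue G H u v).Adj a b) :
    glueDistTo G H u v j y a ≤ glueDistTo G H u v j y b + 1 := by
  rcases glue_adj_iff.mp hab with ⟨l, z, z', h, rfl, rfl⟩ | ⟨w, w', h, rfl, rfl⟩
  · by_cases hl : l = j
    · subst hl
      simpa only [glueDistTo_part_self] using h.dist_le_dist_add_one y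
    · simp only [glueDistTo_part_of_ne hl]
      have := h.dist_le_dist_add_one (u l)
      omega
  · have := h.dist_le_dist_add_one (v j)
    simp only [glueDistTo]
    omega

theorem glue_dist_part_part {i j : Fin k} (hGi : (G i).Connected) (hH : H.Connected)
    (hGj : (G j).Connected) (hij : i ≠ j) (z : α i) (y : α j) :
    (glue G H u v).dist (glueHomPart G H u v i z) (glueHomPart G H u v j y) =
      (G i).dist z (u i) + H.dist (v i) (v j) + (G j).dist (u j) y := by
  have hz := hGi.preconnected z (u i)
  have hvv := hH.preconnected (v i) (v j)
  have hy := hGj.preconnected (u j) y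
  have hz' := hz.map (glueHomPart G H u v i)
  have hvv' := hvv.map (glueHomHub G H u v)
  have hy' := hy.map (glueHomPart G H u v j)
  have dz := (glueHomPart G H u v i).dist_map_le hz
  have dvv := (glueHomHub G H u v).dist_map_le hvv
  have dy := (glueHomPart G H u v j).dist_map_le hy
  simp only [glueHomPart_apply_self, glueHomHub_apply] at hz' hvv' hy' dz dvv dy
  apply le_antisymm
  · have := hz'.dist_triangle_left (glueHomPart G H u v j y)
    have := hvv'.dist_triangle_left (glueHomPart G H u v j y)
    omega
  · simpa [glueDistTo_part_of_ne hij, glueDistTo_part_self] using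
      (hz'.trans (hvv'.trans hy')).le_dist_add_of_adj_le fun _ _ => glueDistTo_le_of_adj j y

theorem maxDistantFrom_glue_inl_iff {i j : Fin k} (hGi : (G i).Connected) (hH : H.Connected)
    (hGj : (G j).Connected) (hij : i ≠ j) (x : {z : α i // z ≠ u i})
    (y : {z : α j // z ≠ u j}) :
    MaxDistantFrom (glue G H u v) (Sum.inl ⟨i, x⟩) (Sum.inl ⟨j, y⟩) ↔
      MaxDistantFrom (G i) x.1 (u i) := by
  have hdist (z : α i) : (glue G H u v).dist (glueHomPart G H u v i z) (Sum.inl ⟨j, y⟩) =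
      (G i).dist z (u i) + (H.dist (v i) (v j) + (G j).dist (u j) y) := by
    rw [← glueHomPart_apply_of_ne y.2, glue_dist_part_part hGi hH hGj hij, add_assoc]
  have hx := hdist x.1
  rw [glueHomPart_apply_of_ne x.2] at hx
  constructor
  · intro h z hz
    have := h _ (glue_adj_inl_iff.mpr ⟨z, hz, rfl⟩)
    rw [hdist, hx] at this
    omega
  · intro h b hb
    obtain ⟨z, hz, rfl⟩ := glue_adj_inl_iff.mp hb
    rw [hdist, hx]
    have := h z hz
    omega

end Glue

theorem glue_mmd_between_parts_general {k : ℕ} {α : Fin k → Type*} {β : Type*}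
    (G : ∀ i, SimpleGraph (α i)) (H : SimpleGraph β)
    (u : ∀ i, α i) (v : Fin k → β)
    (hGc : ∀ i, (G i).Connected) (hHc : H.Connected)
    (i j : Fin k) (hij : i ≠ j) (x : {z : α i // z ≠ u i}) (y : {z : α j // z ≠ u j}) :
    MutuallyMaxDistant (glue G H u v) (Sum.inl ⟨i, x⟩) (Sum.inl ⟨j, y⟩) ↔
      MaxDistantFrom (G i) x.1 (u i) ∧ MaxDistantFrom (G j) y.1 (u j) := by
  rw [MutuallyMaxDistant, maxDistantFrom_glue_inl_iff (hGc i) hHc (hGc j) hij,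
    maxDistantFrom_glue_inl_iff (hGc j) hHc (hGc i) hij.symm]

/-- Vertices `u'_i ∈ V(G i) \ {u i}` and `u'_j ∈ V(G j) \ {u j}` with `i ≠ j` are
mutually maximally distant in the glued graph `J` iff `u'_i` is maximally distant from
`u i` in `G i` and `u'_j` is maximally distant from `u j` in `G j`. -/
theorem glue_mmd_between_parts {k : ℕ} {α : Fin k → Type*} {β : Type*}
    (G : ∀ i, SimpleGraph (α i)) (H : SimpleGraph β)
    (u : ∀ i, α i) (v : Fin k → β)
    (hGc : ∀ i, (G i).Connected) (hHc : H.Connected)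
    (hGn : ∀ i, Nontrivial (α i)) (hHn : Nontrivial β)
    (i j : Fin k) (hij : i ≠ j) (x : {z : α i // z ≠ u i}) (y : {z : α j // z ≠ u j}) :
    MutuallyMaxDistant (glue G H u v) (Sum.inl ⟨i, x⟩) (Sum.inl ⟨j, y⟩) ↔
      MaxDistantFrom (G i) x.1 (u i) ∧ MaxDistantFrom (G j) y.1 (u j) :=
  glue_mmd_between_parts_general G H u v hGc hHc i j hij x y
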